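/- Suppose $X, Y : [0,T] \to \mathbb{R}^{n\times n}$ are continuously differentiable symmetric-matrix-valued functions satisfying the same Riccati differential equation $\dot{M}(t) = A(t)M(t) + M(t)A(t)' - M(t)QM(t)$, where $Q$ is symmetric positive semidefinite and $t \mapsto A(t)$ is continuous, with $X(0) \leq Y(0)$ in the Loewner order. Then $X(t) \leq Y(t)$ for all $t \in [0,T]$ (order-preserving / comparison property of the Riccati flow). -/

import Mathlib

/-!
The difference `D = Y - X` of two solutions solves the linear equation
`D' = (A - Y Q) D + D (Aᵀ - Q X)`, and for every equation `D' = B₁ D + D B₂` the positive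
semidefinite cone is forward invariant. Perturb to `E = D + ε e^{ct} I`, with `c` beyond the
operator norm of `B₁ + B₂`, and suppose `E` leaves the positive definite cone, first at `t₁`.
Then `E(t₁)` is positive semidefinite with a kernel vector `v`. Since `D v = -ε e^{ct₁} v`,
the derivative of `vᵀ E v` at `t₁` is `ε e^{ct₁} (c |v|² - vᵀ (B₁ + B₂) v) > 0`, which
contradicts `vᵀ E v > 0 = vᵀ E(t₁) v` just before `t₁`. Letting `ε → 0` gives the claim.
-/

open scoped Matrix Matrix.Norms.L2Operator

open Set Filter Topology Matrix

section

variable {ι : Type*} [Fintype ι]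

lemma Matrix.dotProduct_mulVec_le_l2_opNorm_mul [DecidableEq ι] (M : Matrix ι ι ℝ)
    (v : ι → ℝ) : v ⬝ᵥ (M *ᵥ v) ≤ ‖M‖ * (v ⬝ᵥ v) := by
  have hinner (u : ι → ℝ) :
      v ⬝ᵥ u = inner ℝ (WithLp.toLp 2 v : EuclideanSpace ℝ ι) (WithLp.toLp 2 u) := by
    rw [EuclideanSpace.inner_toLp_toLp, star_trivial, dotProduct_comm]
  set w : EuclideanSpace ℝ ι := WithLp.toLp 2 v
  calc v ⬝ᵥ (M *ᵥ v) ≤ ‖w‖ * ‖(WithLp.toLp 2 (M *ᵥ v) : EuclideanSpace ℝ ι)‖ :=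
        hinner _ ▸ real_inner_le_norm _ _
    _ ≤ ‖w‖ * (‖M‖ * ‖w‖) := by gcongr; exact M.l2_opNorm_mulVec w
    _ = ‖M‖ * (v ⬝ᵥ v) := by rw [hinner v, real_inner_self_eq_norm_sq]; ring

lemma Matrix.smul_dotProduct_mulVec_smul (M : Matrix ι ι ℝ) (r : ℝ) (v : ι → ℝ) :
    (r • v) ⬝ᵥ (M *ᵥ (r • v)) = r ^ 2 * (v ⬝ᵥ (M *ᵥ v)) := by
  rw [mulVec_smul, smul_dotProduct, dotProduct_smul, smul_eq_mul, smul_eq_mul]; ring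

lemma Matrix.IsHermitian.posDef_iff_forall_mem_sphere {M : Matrix ι ι ℝ}
    (hM : M.IsHermitian) :
    M.PosDef ↔ ∀ v ∈ Metric.sphere (0 : ι → ℝ) 1, 0 < v ⬝ᵥ (M *ᵥ v) := by
  refine ⟨fun h v hv => ?_, fun h => .of_dotProduct_mulVec_pos hM fun x hx => ?_⟩
  · simpa using h.dotProduct_mulVec_pos (ne_zero_of_mem_sphere one_ne_zero ⟨v, hv⟩ : v ≠ 0)
  · have hx' : 0 < ‖x‖ := norm_pos_iff.mpr hx
    have := h (‖x‖⁻¹ • x) (by simp [norm_smul, hx'.ne'])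
    rw [smul_dotProduct_mulVec_smul] at this
    simpa using pos_of_mul_pos_right this (by positivity)

lemma IsCompact.sep_not_posDef {α : Type*} [TopologicalSpace α] [T2Space α] {K : Set α}
    {f : α → Matrix ι ι ℝ} (hK : IsCompact K) (hf : ContinuousOn f K)
    (hsymm : ∀ t ∈ K, (f t).IsHermitian) : IsCompact {t ∈ K | ¬ (f t).PosDef} := by
  set S := Metric.sphere (0 : ι → ℝ) 1
  have hq : ContinuousOn (fun p : α × (ι → ℝ) => p.2 ⬝ᵥ (f p.1 *ᵥ p.2)) (K ×ˢ S) :=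
    (continuous_snd.dotProduct (continuous_fst.matrix_mulVec continuous_snd)).comp_continuousOn
      ((hf.comp continuousOn_fst fun _ hp => hp.1).prodMk continuousOn_snd)
  have hcpt := (hK.prod (isCompact_sphere (0 : ι → ℝ) 1)).of_isClosed_subset
    (hq.preimage_isClosed_of_isClosed (hK.isClosed.prod Metric.isClosed_sphere)
      (isClosed_Iic (a := 0))) inter_subset_left
  convert hcpt.image continuous_fst using 1
  ext t
  simp only [mem_image, mem_inter_iff, mem_prod, mem_preimage, mem_Iic, Prod.exists]
  constructor
  · rintro ⟨ht, hnot⟩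
    obtain ⟨v, hv, hq⟩ :=
      not_forall₂.mp (mt (hsymm t ht).posDef_iff_forall_mem_sphere.mpr hnot)
    exact ⟨t, v, ⟨⟨ht, hv⟩, not_lt.mp hq⟩, rfl⟩
  · rintro ⟨t, v, ⟨⟨ht, hv⟩, hq⟩, rfl⟩
    exact ⟨ht, fun h =>
      (((hsymm t ht).posDef_iff_forall_mem_sphere.mp h v hv).trans_le hq).false⟩

lemma HasDerivAt.eventually_nhdsLT_lt {g : ℝ → ℝ} {g' x : ℝ} (hg : HasDerivAt g g' x)
    (hg' : 0 < g') : ∀ᶠ t in 𝓝[<] x, g t < g x := by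
  filter_upwards [nhdsLT_le_nhdsNE x
      ((hasDerivAt_iff_tendsto_slope.mp hg).eventually (eventually_gt_nhds hg')),
    self_mem_nhdsWithin] with t hslope ht
  exact (slope_pos_iff_gt ht).mp hslope

lemma HasDerivAt.dotProduct_mulVec [DecidableEq ι] {f : ℝ → Matrix ι ι ℝ}
    {f' : Matrix ι ι ℝ} {t : ℝ} (hf : HasDerivAt f f' t) (v : ι → ℝ) :
    HasDerivAt (fun s => v ⬝ᵥ (f s *ᵥ v)) (v ⬝ᵥ (f' *ᵥ v)) t :=
  let q : Matrix ι ι ℝ →ₗ[ℝ] ℝ :=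
    { toFun := fun M => v ⬝ᵥ (M *ᵥ v)
      map_add' := fun M N => by simp only [add_mulVec, dotProduct_add]
      map_smul' := fun c M => by simp only [smul_mulVec, dotProduct_smul, RingHom.id_apply] }
  (LinearMap.toContinuousLinearMap q).hasFDerivAt.comp_hasDerivAt t hf

theorem posDef_of_hasDerivAt_of_mulVec_eq_zero [DecidableEq ι] {f f' : ℝ → Matrix ι ι ℝ}
    {a b : ℝ} (hsymm : ∀ t ∈ Icc a b, (f t).IsHermitian)
    (hf : ∀ t ∈ Icc a b, HasDerivAt f (f' t) t) (ha : (f a).PosDef)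
    (hker : ∀ t ∈ Ioc a b, ∀ v ≠ 0, f t *ᵥ v = 0 → 0 < v ⬝ᵥ (f' t *ᵥ v)) :
    ∀ t ∈ Icc a b, (f t).PosDef := by
  set S := {t ∈ Icc a b | ¬ (f t).PosDef}
  by_contra! hSne
  have hS : IsCompact S := isCompact_Icc.sep_not_posDef
    (fun t ht => (hf t ht).continuousAt.continuousWithinAt) hsymm
  obtain ⟨ht₁, hnot⟩ : sInf S ∈ S := hS.sInf_mem hSne
  set t₁ := sInf S
  have hat₁ : a < t₁ := ht₁.1.lt_of_ne fun h => hnot (h ▸ ha)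
  have hleft : ∀ᶠ t in 𝓝[<] t₁, (f t).PosDef := by
    filter_upwards [Ioo_mem_nhdsLT hat₁] with t ht
    by_contra h
    exact (csInf_le hS.bddBelow ⟨⟨ht.1.le, ht.2.le.trans ht₁.2⟩, h⟩).not_gt ht.2
  have hpsd : (f t₁).PosSemidef := .of_dotProduct_mulVec_nonneg (hsymm t₁ ht₁) fun w =>
    ge_of_tendsto (((hf t₁ ht₁).dotProduct_mulVec (star w)).continuousAt.tendsto.mono_left
      nhdsWithin_le_nhds) (hleft.mono fun _ h => h.posSemidef.dotProduct_mulVec_nonneg w)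
  obtain ⟨v, hv, hq⟩ :
      ∃ v ∈ Metric.sphere (0 : ι → ℝ) 1, v ⬝ᵥ (f t₁ *ᵥ v) ≤ 0 := by
    simpa [(hsymm t₁ ht₁).posDef_iff_forall_mem_sphere] using hnot
  have hv0 : v ≠ 0 := ne_zero_of_mem_sphere one_ne_zero ⟨v, hv⟩
  have hq0 : v ⬝ᵥ (f t₁ *ᵥ v) = 0 :=
    hq.antisymm (by simpa using hpsd.dotProduct_mulVec_nonneg v)
  have hkerv : f t₁ *ᵥ v = 0 := (hpsd.dotProduct_mulVec_zero_iff v).mp (by simpa using hq0)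
  obtain ⟨t, hlt, hpos⟩ := (((hf t₁ ht₁).dotProduct_mulVec v).eventually_nhdsLT_lt
    (hker t₁ ⟨hat₁, ht₁.2⟩ v hv0 hkerv) |>.and hleft).exists
  have := hpos.dotProduct_mulVec_pos hv0
  simp only [star_trivial] at this
  linarith

lemma Matrix.IsHermitian.dotProduct_mul_add_mul_mulVec {D : Matrix ι ι ℝ}
    (hD : D.IsHermitian) (B₁ B₂ : Matrix ι ι ℝ) {v : ι → ℝ} {μ : ℝ}
    (hv : D *ᵥ v = μ • v) :
    v ⬝ᵥ ((B₁ * D + D * B₂) *ᵥ v) = μ * (v ⬝ᵥ ((B₁ + B₂) *ᵥ v)) := by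
  have hvD : v ᵥ* D = μ • v := by
    rw [← mulVec_transpose, (isHermitian_iff_isSymm.mp hD).eq, hv]
  rw [add_mulVec, add_mulVec, dotProduct_add, dotProduct_add, ← mulVec_mulVec, ← mulVec_mulVec,
    hv, dotProduct_mulVec v D, hvD, mulVec_smul, dotProduct_smul, smul_dotProduct, smul_eq_mul,
    smul_eq_mul, mul_add]

lemma Matrix.posSemidef_of_forall_posDef_add_smul_one [DecidableEq ι] {D : Matrix ι ι ℝ}
    (hD : D.IsHermitian) (h : ∀ ε : ℝ, 0 < ε → (D + ε • 1).PosDef) : D.PosSemidef := by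
  refine .of_dotProduct_mulVec_nonneg hD fun v => ?_
  have hlim : Tendsto (fun ε : ℝ => star v ⬝ᵥ ((D + ε • 1) *ᵥ v)) (𝓝[>] 0)
      (𝓝 (star v ⬝ᵥ (D *ᵥ v))) := by
    simp only [add_mulVec, smul_mulVec, one_mulVec, dotProduct_add, dotProduct_smul, smul_eq_mul]
    refine (Continuous.tendsto' ?_ 0 _ (by simp)).mono_left nhdsWithin_le_nhds
    fun_prop
  exact ge_of_tendsto hlim (eventually_nhdsWithin_of_forall fun ε hε =>
    (h ε hε).posSemidef.dotProduct_mulVec_nonneg v)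

theorem posSemidef_of_hasDerivAt_mul_add_mul [DecidableEq ι]
    {D B₁ B₂ : ℝ → Matrix ι ι ℝ} {a b : ℝ}
    (hsymm : ∀ t ∈ Icc a b, (D t).IsHermitian)
    (hD : ∀ t ∈ Icc a b, HasDerivAt D (B₁ t * D t + D t * B₂ t) t)
    (hB₁ : ContinuousOn B₁ (Icc a b)) (hB₂ : ContinuousOn B₂ (Icc a b))
    (ha : (D a).PosSemidef) : ∀ t ∈ Icc a b, (D t).PosSemidef := by
  obtain ⟨C, hC⟩ := isCompact_Icc.exists_bound_of_continuousOn (hB₁.add hB₂)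
  set c := C + 1
  have hpert (ε : ℝ) (hε : 0 < ε) :
      ∀ t ∈ Icc a b, (D t + (ε * Real.exp (c * t)) • 1).PosDef := by
    refine posDef_of_hasDerivAt_of_mulVec_eq_zero
      (f' := fun t => B₁ t * D t + D t * B₂ t + (ε * (Real.exp (c * t) * c)) • 1)
      (fun t ht => ?_) (fun t ht => ?_) ?_ fun t ht v hv hker => ?_
    · exact (hsymm t ht).add (PosDef.one.smul (by positivity)).isHermitian
    · exact ((hD t ht).add ((((hasDerivAt_id t).const_mul c).exp.const_mul ε).smul_const 1)
        |>.congr_deriv (by simp))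
    · exact .posSemidef_add ha (.smul .one (by positivity))
    · have ht' := Ioc_subset_Icc_self ht
      set s := ε * Real.exp (c * t)
      have hs : 0 < s := by positivity
      have hv' : D t *ᵥ v = (-s) • v := by
        rw [neg_smul, eq_neg_iff_add_eq_zero, ← hker, add_mulVec, smul_mulVec, one_mulVec]
      have hvv : 0 < v ⬝ᵥ v :=
        (by simpa using dotProduct_star_self_nonneg v : 0 ≤ v ⬝ᵥ v).lt_of_ne'
          (dotProduct_self_eq_zero.not.mpr hv)
      have hB : v ⬝ᵥ ((B₁ t + B₂ t) *ᵥ v) ≤ C * (v ⬝ᵥ v) :=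
        ((B₁ t + B₂ t).dotProduct_mulVec_le_l2_opNorm_mul v).trans
          (mul_le_mul_of_nonneg_right (hC t ht') hvv.le)
      rw [add_mulVec, dotProduct_add, (hsymm t ht').dotProduct_mul_add_mul_mulVec _ _ hv',
        smul_mulVec, one_mulVec, dotProduct_smul, smul_eq_mul]
      nlinarith
  intro t ht
  refine posSemidef_of_forall_posDef_add_smul_one (hsymm t ht) fun δ hδ => ?_
  simpa [div_mul_cancel₀ _ (Real.exp_pos (c * t)).ne'] using
    hpert (δ / Real.exp (c * t)) (by positivity) t ht

end

lemma riccati_sub_riccati {R : Type*} [Ring R] (a a' q x y : R) :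
    a * y + y * a' - y * q * y - (a * x + x * a' - x * q * x) =
      (a - y * q) * (y - x) + (y - x) * (a' - q * x) := by
  noncomm_ring

theorem stmt_15_general {n : ℕ} (T : ℝ)
    (A : ℝ → Matrix (Fin n) (Fin n) ℝ) (hA : ContinuousOn A (Set.Icc 0 T))
    (Q : Matrix (Fin n) (Fin n) ℝ)
    (X Y : ℝ → Matrix (Fin n) (Fin n) ℝ)
    (hXsymm : ∀ t ∈ Set.Icc (0 : ℝ) T, (X t).IsSymm)
    (hYsymm : ∀ t ∈ Set.Icc (0 : ℝ) T, (Y t).IsSymm)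
    (hX : ∀ t ∈ Set.Icc (0 : ℝ) T,
      HasDerivAt X (A t * X t + X t * (A t)ᵀ - X t * Q * X t) t)
    (hY : ∀ t ∈ Set.Icc (0 : ℝ) T,
      HasDerivAt Y (A t * Y t + Y t * (A t)ᵀ - Y t * Q * Y t) t)
    (h0 : (Y 0 - X 0).PosSemidef) :
    ∀ t ∈ Set.Icc (0 : ℝ) T, (Y t - X t).PosSemidef := by
  have hXc : ContinuousOn X (Icc 0 T) := fun t ht => (hX t ht).continuousAt.continuousWithinAt
  have hYc : ContinuousOn Y (Icc 0 T) := fun t ht => (hY t ht).continuousAt.continuousWithinAt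
  refine posSemidef_of_hasDerivAt_mul_add_mul (D := fun t => Y t - X t)
    (B₁ := fun t => A t - Y t * Q) (B₂ := fun t => (A t)ᵀ - Q * X t)
    (fun t ht => isHermitian_iff_isSymm.mpr ((hYsymm t ht).sub (hXsymm t ht)))
    (fun t ht => ?_) (hA.sub (hYc.mul continuousOn_const))
    ((continuous_id.matrix_transpose.comp_continuousOn hA).sub (continuousOn_const.mul hXc))
    h0
  exact ((hY t ht).sub (hX t ht)).congr_deriv (riccati_sub_riccati _ _ _ _ _)

theorem stmt_15 {n : ℕ} (T : ℝ) (hT : 0 ≤ T)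
    (A : ℝ → Matrix (Fin n) (Fin n) ℝ) (hA : ContinuousOn A (Set.Icc 0 T))
    (Q : Matrix (Fin n) (Fin n) ℝ) (hQ : Q.PosSemidef)
    (X Y : ℝ → Matrix (Fin n) (Fin n) ℝ)
    (hXsymm : ∀ t ∈ Set.Icc (0 : ℝ) T, (X t).IsSymm)
    (hYsymm : ∀ t ∈ Set.Icc (0 : ℝ) T, (Y t).IsSymm)
    (hX : ∀ t ∈ Set.Icc (0 : ℝ) T,
      HasDerivAt X (A t * X t + X t * (A t)ᵀ - X t * Q * X t) t)
    (hY : ∀ t ∈ Set.Icc (0 : ℝ) T,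
      HasDerivAt Y (A t * Y t + Y t * (A t)ᵀ - Y t * Q * Y t) t)
    (hXcont : ContinuousOn (fun t => A t * X t + X t * (A t)ᵀ - X t * Q * X t) (Set.Icc 0 T))
    (hYcont : ContinuousOn (fun t => A t * Y t + Y t * (A t)ᵀ - Y t * Q * Y t) (Set.Icc 0 T))
    (h0 : (Y 0 - X 0).PosSemidef) :
    ∀ t ∈ Set.Icc (0 : ℝ) T, (Y t - X t).PosSemidef :=
  stmt_15_general T A hA Q X Y hXsymm hYsymm hX hY h0
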